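/- (Sign-invariance) Let X be a Banach space, 1 ≤ p < ∞, and for each dyadic cube Q ∈ Δ let u_Q ∈ L^p(ℝⁿ; X), with only finitely many u_Q nonzero. Then the three randomized quantities E‖∑_k ε_k ∑_{Q ∈ Δ_{2^k}} 1_Q u_Q‖_{L^p(ℝⁿ;X)}, E‖∑_k ε_k ∑_{Q ∈ Δ_{2^k}} h_Q u_Q‖_{L^p(ℝⁿ;X)}, and E‖∑_{Q ∈ Δ} ε_Q 1_Q u_Q‖_{L^p(ℝⁿ;X)} are pairwise comparable, with implied constants depending only on p. -/

import Mathlib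

/-!
Write `𝔼 F(∑ εᵢ vᵢ)` for the average over sign patterns. For functions in `L^p`, the `p`-th
moment `𝔼 ‖∑ εᵢ fᵢ‖_p^p` is, by Fubini, the integral over `x` of the pointwise moments
`𝔼 ‖∑ εᵢ fᵢ(x)‖^p`, and at a fixed `x` the three families have the same pointwise moment:
the Haar blocks differ from the indicator blocks by a sign depending only on the scale and `x`,
and since `x` lies in exactly one cube of each scale, the blocks `∑_{Q ∈ Δ_{2^k}} 1_Q u_Q(x)` are,
up to zeros, the individual terms `1_Q u_Q(x)`. Kahane's inequality
`𝔼 ‖S‖^p ≤ (K_p 𝔼 ‖S‖)^p`, proved by the Lévy and Hoffmann-Jørgensen inequalities, together with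
Jensen's inequality turns equal `p`-th moments into comparable first moments.
-/

open MeasureTheory
open scoped ENNReal

noncomputable section

/-- Expectation `E‖∑_{i∈s} ε_i f i‖` over independent random signs indexed by the finset `s`. -/
def radE {ι X : Type*} [DecidableEq ι] [NormedAddCommGroup X]
    (s : Finset ι) (f : ι → X) : ℝ :=
  ((2 : ℝ) ^ s.card)⁻¹ *
    ∑ σ : {i // i ∈ s} → Bool, ‖∑ i : {i // i ∈ s}, (if σ i then f i.1 else - f i.1)‖

/-- The dyadic cube of side `2^k` indexed by `m ∈ ℤⁿ`, i.e. `2^k([0,1)ⁿ + m)`. -/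
def dyadicCube (n : ℕ) (k : ℤ) (m : Fin n → ℤ) : Set (Fin n → ℝ) :=
  {x | ∀ i, (2 : ℝ) ^ k * (m i : ℝ) ≤ x i ∧ x i < (2 : ℝ) ^ k * ((m i : ℝ) + 1)}

/-- The integral average `⟨u⟩_S = |S|⁻¹ ∫_S u` of a vector-valued function over a set. -/
def setAvg (n : ℕ) {X : Type*} [NormedAddCommGroup X] [NormedSpace ℝ X]
    (S : Set (Fin n → ℝ)) (u : (Fin n → ℝ) → X) : X :=
  ((volume S).toReal)⁻¹ • ∫ y in S, u y

/-- `A_{2^k} u (x)`: the average of `u` over the dyadic cube of side `2^k` containing `x`. -/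
def dyadicAvg (n : ℕ) {X : Type*} [NormedAddCommGroup X] [NormedSpace ℝ X]
    (u : (Fin n → ℝ) → X) (k : ℤ) (x : Fin n → ℝ) : X :=
  setAvg n (dyadicCube n k (fun i => ⌊x i / (2 : ℝ) ^ k⌋)) u

/-- The Rademacher maximal function
`M_R u (x) = sup { E‖∑_k ε_k λ_k A_{2^k}u(x)‖ : λ finitely nonzero, ‖λ‖_{ℓ²} ≤ 1 }`. -/
def rademacherMaximal (n : ℕ) {X : Type*} [NormedAddCommGroup X] [NormedSpace ℝ X]
    (u : (Fin n → ℝ) → X) (x : Fin n → ℝ) : ℝ :=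
  ⨆ p : {p : Finset ℤ × (ℤ → ℝ) // ∑ k ∈ p.1, (p.2 k) ^ 2 ≤ 1},
    radE p.1.1 (fun k => p.1.2 k • dyadicAvg n u k x)

/-- The dyadic Hardy–Littlewood maximal function `M u (x) = sup_{Q ∋ x} ‖⟨u⟩_Q‖`. -/
def dyadicMaximal (n : ℕ) {X : Type*} [NormedAddCommGroup X] [NormedSpace ℝ X]
    (u : (Fin n → ℝ) → X) (x : Fin n → ℝ) : ℝ :=
  ⨆ k : ℤ, ‖dyadicAvg n u k x‖

/-- Random sign attached to `i` by a sign pattern `σ` on the finset `s` (`+1` off `s`). -/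
def sgn {ι : Type*} [DecidableEq ι] (s : Finset ι) (σ : {i // i ∈ s} → Bool) (i : ι) : ℝ :=
  if h : i ∈ s then (if σ ⟨i, h⟩ then 1 else -1) else 1

/-- The `L^∞`-normalized Haar function `h_Q = 1_{Q_+} − 1_{Q_−}` of the dyadic cube `Q`,
split into halves in the first coordinate. -/
def haarFn (n : ℕ) (hn : 0 < n) (q : ℤ × (Fin n → ℤ)) (x : Fin n → ℝ) : ℝ :=
  Set.indicator (dyadicCube n q.1 q.2)
    (fun y => if y ⟨0, hn⟩ < (2 : ℝ) ^ q.1 * (q.2 ⟨0, hn⟩ : ℝ) + (2 : ℝ) ^ (q.1 - 1)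
      then 1 else -1) x


open Finset

def boolSign (b : Bool) : ℝ := if b then 1 else -1

@[simp] lemma boolSign_true : boolSign true = 1 := rfl

@[simp] lemma boolSign_false : boolSign false = -1 := rfl

lemma boolSign_not (b : Bool) : boolSign (!b) = -boolSign b := by cases b <;> simp

lemma boolSign_mul_self (b : Bool) : boolSign b * boolSign b = 1 := by cases b <;> norm_num

lemma norm_boolSign_smul {E : Type*} [NormedAddCommGroup E] [NormedSpace ℝ E] (b : Bool) (z : E) :
    ‖boolSign b • z‖ = ‖z‖ := by
  cases b <;> simp

section Counting

variable {α : Type*} [Fintype α]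

lemma card_filter_mul_le_sum (f : α → ℝ) (hf : ∀ a, 0 ≤ f a) (t : ℝ) :
    (#{a | t < f a} : ℝ) * t ≤ ∑ a, f a :=
  calc (#{a | t < f a} : ℝ) * t = ∑ a with t < f a, t := by rw [sum_const, nsmul_eq_mul]
    _ ≤ ∑ a with t < f a, f a := sum_le_sum fun a ha => (mem_filter.mp ha).2.le
    _ ≤ ∑ a, f a := sum_le_sum_of_subset_of_nonneg (filter_subset _ _) fun a _ _ => hf a

-- The reflection principle in counting form.
lemma card_filter_le_two_mul_of_perm (π : Equiv.Perm α) {P Q : α → Prop} [DecidablePred P]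
    [DecidablePred Q] (h : ∀ a, P a → Q a ∨ Q (π a)) : #{a | P a} ≤ 2 * #{a | Q a} := by
  classical
  have hπ : #{a | Q (π a)} = #{a | Q a} := card_equiv π fun a => by simp
  calc #{a | P a} ≤ #(({a | Q a} : Finset α) ∪ ({a | Q (π a)} : Finset α)) :=
        card_le_card fun a ha => by simpa using h a (mem_filter.mp ha).2
    _ ≤ #{a | Q a} + #{a | Q (π a)} := card_union_le _ _
    _ = 2 * #{a | Q a} := by rw [hπ]; ring

-- Independence of events depending on disjoint sets of coordinates.
lemma card_filter_and_mul_card {ι β : Type*} [Fintype ι] [DecidableEq ι] [Fintype β]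
    (c : ι → Prop) [DecidablePred c] (A B : (ι → β) → Prop) [DecidablePred A] [DecidablePred B]
    (hA : ∀ σ σ', (∀ i, c i → σ i = σ' i) → A σ → A σ')
    (hB : ∀ σ σ', (∀ i, ¬ c i → σ i = σ' i) → B σ → B σ') :
    #{σ | A σ ∧ B σ} * Fintype.card (ι → β) = #{σ | A σ} * #{σ | B σ} := by
  classical
  let e := Equiv.piEquivPiSubtypeProd c fun _ => β
  let A' : ({i // c i} → β) → Prop := fun a => ∃ b, A (e.symm (a, b))
  let B' : ({i // ¬ c i} → β) → Prop := fun b => ∃ a, B (e.symm (a, b))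
  have hA' : ∀ σ, A σ ↔ A' (e σ).1 := fun σ =>
    ⟨fun h => ⟨(e σ).2, by simpa using h⟩, fun ⟨b, h⟩ => hA _ _ (fun i hi => by
      simp [e, Equiv.piEquivPiSubtypeProd, hi]) h⟩
  have hB' : ∀ σ, B σ ↔ B' (e σ).2 := fun σ =>
    ⟨fun h => ⟨(e σ).1, by simpa using h⟩, fun ⟨a, h⟩ => hB _ _ (fun i hi => by
      simp [e, Equiv.piEquivPiSubtypeProd, hi]) h⟩
  have h_cardAB : #{σ | A σ ∧ B σ} = #(({a | A' a} : Finset _) ×ˢ ({b | B' b} : Finset _)) :=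
    card_equiv e fun σ => by simp [hA', hB']
  have h_cardA : #{σ | A σ} = #(({a | A' a} : Finset _) ×ˢ (univ : Finset ({i // ¬ c i} → β))) :=
    card_equiv e fun σ => by simp [hA']
  have h_cardB : #{σ | B σ} = #((univ : Finset ({i // c i} → β)) ×ˢ ({b | B' b} : Finset _)) :=
    card_equiv e fun σ => by simp [hB']
  rw [h_cardAB, h_cardA, h_cardB, Fintype.card_congr e, Fintype.card_prod]
  simp only [card_product, card_univ]
  ring

end Counting

lemma min_le_add_sum_ite (r : ℝ) {t : ℕ → ℝ} (ht : ∀ j, 0 ≤ t j) (M : ℕ) :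
    min r (t M) ≤ t 0 + ∑ j ∈ range M, if t j < r then t (j + 1) else 0 := by
  induction M with
  | zero => simp
  | succ M ih =>
    rw [sum_range_succ]
    split_ifs with h
    · rw [min_eq_right h.le] at ih
      linarith [min_le_right r (t (M + 1)), ht M]
    · rw [min_eq_left (not_lt.1 h)] at ih
      linarith [min_le_left r (t (M + 1))]

section Rademacher

variable {ι E : Type*} [NormedAddCommGroup E] [NormedSpace ℝ E]

def flipSigns (c : ι → Prop) [DecidablePred c] : Equiv.Perm (ι → Bool) :=
  Function.Involutive.toPerm (fun σ i => if c i then !σ i else σ i) fun σ => by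
    funext i; by_cases h : c i <;> simp [h]

lemma flipSigns_apply (c : ι → Prop) [DecidablePred c] (σ : ι → Bool) (i : ι) :
    flipSigns c σ i = if c i then !σ i else σ i := rfl

lemma boolSign_flipSigns (c : ι → Prop) [DecidablePred c] (σ : ι → Bool) (i : ι) :
    boolSign (flipSigns c σ i) = if c i then -boolSign (σ i) else boolSign (σ i) := by
  by_cases h : c i <;> simp [flipSigns_apply, h, boolSign_not]

lemma sum_flipSigns_of_forall_not {c : ι → Prop} [DecidablePred c] {s : Finset ι}
    (h : ∀ i ∈ s, ¬ c i) (y : ι → E) (σ : ι → Bool) :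
    ∑ i ∈ s, boolSign (flipSigns c σ i) • y i = ∑ i ∈ s, boolSign (σ i) • y i :=
  sum_congr rfl fun i hi => by rw [boolSign_flipSigns, if_neg (h i hi)]

lemma sum_flipSigns_of_forall {c : ι → Prop} [DecidablePred c] {s : Finset ι}
    (h : ∀ i ∈ s, c i) (y : ι → E) (σ : ι → Bool) :
    ∑ i ∈ s, boolSign (flipSigns c σ i) • y i = -∑ i ∈ s, boolSign (σ i) • y i := by
  rw [← sum_neg_distrib]
  exact sum_congr rfl fun i hi => by rw [boolSign_flipSigns, if_pos (h i hi), neg_smul]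

variable [Fintype ι]

def radSum (y : ι → E) (σ : ι → Bool) : E := ∑ i, boolSign (σ i) • y i

variable [DecidableEq ι]

def radExpect (F : E → ℝ) (y : ι → E) : ℝ := (2 ^ Fintype.card ι : ℝ)⁻¹ * ∑ σ, F (radSum y σ)

lemma radExpect_nonneg {F : E → ℝ} (hF : ∀ z, 0 ≤ F z) (y : ι → E) : 0 ≤ radExpect F y :=
  mul_nonneg (by positivity) (sum_nonneg fun _ _ => hF _)

lemma sum_boolSign_mul_boolSign (i j : ι) :
    ∑ σ : ι → Bool, boolSign (σ i) * boolSign (σ j) =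
      if i = j then (2 : ℝ) ^ Fintype.card ι else 0 := by
  split_ifs with h
  · subst h
    simp [boolSign_mul_self]
  · have h_flip := Equiv.sum_comp (flipSigns (· = j)) fun σ => boolSign (σ i) * boolSign (σ j)
    have h_neg : ∀ σ : ι → Bool, boolSign (flipSigns (· = j) σ i) *
        boolSign (flipSigns (· = j) σ j) = -(boolSign (σ i) * boolSign (σ j)) := fun σ => by
      rw [boolSign_flipSigns, boolSign_flipSigns, if_neg h, if_pos rfl, mul_neg]
    rw [sum_congr rfl fun σ _ => h_neg σ, sum_neg_distrib] at h_flip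
    linarith

lemma sum_boolSign_smul_radSum (y : ι → E) (i : ι) :
    ∑ σ : ι → Bool, boolSign (σ i) • radSum y σ = (2 : ℝ) ^ Fintype.card ι • y i := by
  simp_rw [radSum, smul_sum, smul_smul]
  rw [sum_comm]
  simp_rw [← sum_smul, sum_boolSign_mul_boolSign, ite_smul, zero_smul]
  simp

lemma norm_le_radExpect_norm (y : ι → E) (i : ι) : ‖y i‖ ≤ radExpect (‖·‖) y := by
  rw [radExpect, le_inv_mul_iff₀ (by positivity)]
  calc (2 : ℝ) ^ Fintype.card ι * ‖y i‖ = ‖∑ σ : ι → Bool, boolSign (σ i) • radSum y σ‖ := by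
        rw [sum_boolSign_smul_radSum, norm_smul, Real.norm_of_nonneg (by positivity)]
    _ ≤ ∑ σ : ι → Bool, ‖radSum y σ‖ :=
        (norm_sum_le _ _).trans_eq (sum_congr rfl fun σ _ => norm_boolSign_smul _ _)

end Rademacher

section Kahane

variable {E : Type*} [NormedAddCommGroup E] [NormedSpace ℝ E] {N : ℕ} (y : Fin N → E)

def partialSum (j : ℕ) (σ : Fin N → Bool) : E :=
  ∑ i ∈ univ.filter (fun i : Fin N => (i : ℕ) < j), boolSign (σ i) • y i

def tailSum (j : ℕ) (σ : Fin N → Bool) : E :=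
  ∑ i ∈ univ.filter (fun i : Fin N => j ≤ (i : ℕ)), boolSign (σ i) • y i

lemma partialSum_add_tailSum (j : ℕ) (σ : Fin N → Bool) :
    partialSum y j σ + tailSum y j σ = radSum y σ := by
  simp only [partialSum, tailSum, radSum, ← not_lt]
  exact sum_filter_add_sum_filter_not _ _ _

lemma partialSum_zero (σ : Fin N → Bool) : partialSum y 0 σ = 0 := by simp [partialSum]

lemma partialSum_length (σ : Fin N → Bool) : partialSum y N σ = radSum y σ := by
  simp [partialSum, radSum]

lemma norm_partialSum_succ_le {A : ℝ} (hA : 0 ≤ A) (hy : ∀ i, ‖y i‖ ≤ A) (j : ℕ)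
    (σ : Fin N → Bool) : ‖partialSum y (j + 1) σ‖ ≤ ‖partialSum y j σ‖ + A := by
  have h_split : partialSum y (j + 1) σ = partialSum y j σ +
      ∑ i ∈ univ.filter (fun i : Fin N => (i : ℕ) = j), boolSign (σ i) • y i := by
    rw [partialSum, partialSum, ← sum_union (disjoint_filter.2 fun i _ h h' => by omega)]
    congr 1
    ext i
    simp only [mem_filter, mem_univ, true_and, mem_union]
    omega
  have h_card : #{i : Fin N | (i : ℕ) = j} ≤ 1 :=
    card_le_one.2 fun a ha b hb => Fin.ext (by simp_all)
  have h_new : ‖∑ i ∈ univ.filter (fun i : Fin N => (i : ℕ) = j), boolSign (σ i) • y i‖ ≤ A :=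
    calc _ ≤ ∑ i ∈ univ.filter (fun i : Fin N => (i : ℕ) = j), ‖boolSign (σ i) • y i‖ :=
          norm_sum_le _ _
      _ ≤ #{i : Fin N | (i : ℕ) = j} • A :=
          sum_le_card_nsmul _ _ _ fun i _ => (norm_boolSign_smul _ _).trans_le (hy i)
      _ ≤ A := by
          rw [nsmul_eq_mul]
          exact mul_le_of_le_one_left hA (by exact_mod_cast h_card)
  rw [h_split]
  exact (norm_add_le _ _).trans (by gcongr)

lemma partialSum_congr {j m : ℕ} (hm : m ≤ j) {σ σ' : Fin N → Bool}
    (h : ∀ i : Fin N, (i : ℕ) < j → σ i = σ' i) : partialSum y m σ = partialSum y m σ' :=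
  sum_congr rfl fun i hi => by rw [h i (by simp at hi; omega)]

lemma tailSum_congr {j : ℕ} {σ σ' : Fin N → Bool}
    (h : ∀ i : Fin N, ¬ (i : ℕ) < j → σ i = σ' i) : tailSum y j σ = tailSum y j σ' :=
  sum_congr rfl fun i hi => by rw [h i (by simp at hi; omega)]

lemma partialSum_flipSigns_of_le {m j : ℕ} (hm : m ≤ j) (σ : Fin N → Bool) :
    partialSum y m (flipSigns (fun i : Fin N => j ≤ (i : ℕ)) σ) = partialSum y m σ :=
  sum_flipSigns_of_forall_not (fun i hi => by simp at hi; omega) y σ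

lemma radSum_add_radSum_flipSigns_le (j : ℕ) (σ : Fin N → Bool) :
    radSum y σ + radSum y (flipSigns (fun i : Fin N => j ≤ (i : ℕ)) σ) =
      (2 : ℝ) • partialSum y j σ := by
  rw [← partialSum_add_tailSum y j σ, ← partialSum_add_tailSum y j,
    partialSum_flipSigns_of_le y le_rfl, tailSum, tailSum,
    sum_flipSigns_of_forall (fun i hi => by simpa using hi)]
  module

lemma radSum_add_radSum_flipSigns_lt (j : ℕ) (σ : Fin N → Bool) :
    radSum y σ + radSum y (flipSigns (fun i : Fin N => (i : ℕ) < j) σ) =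
      (2 : ℝ) • tailSum y j σ := by
  rw [← partialSum_add_tailSum y j σ, ← partialSum_add_tailSum y j, partialSum, partialSum,
    tailSum, tailSum, sum_flipSigns_of_forall (fun i hi => by simpa using hi),
    sum_flipSigns_of_forall_not (fun i hi => by simp at hi; omega)]
  module

lemma lt_norm_or_lt_norm_of_add_eq {t : ℝ} {u u' v : E} (h : u + u' = (2 : ℝ) • v)
    (hv : t < ‖v‖) : t < ‖u‖ ∨ t < ‖u'‖ := by
  have : ‖(2 : ℝ) • v‖ ≤ ‖u‖ + ‖u'‖ := h ▸ norm_add_le _ _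
  rw [norm_smul, Real.norm_two] at this
  by_contra! h'
  linarith [h'.1, h'.2]

def firstExceed (t : ℝ) (j : ℕ) (σ : Fin N → Bool) : Prop :=
  t < ‖partialSum y j σ‖ ∧ ∀ m < j, ‖partialSum y m σ‖ ≤ t

instance (t : ℝ) (j : ℕ) : DecidablePred (firstExceed y t j) :=
  fun _ => inferInstanceAs (Decidable (_ ∧ _))

lemma firstExceed_flipSigns_iff {t : ℝ} {j : ℕ} (σ : Fin N → Bool) :
    firstExceed y t j (flipSigns (fun i : Fin N => j ≤ (i : ℕ)) σ) ↔ firstExceed y t j σ := by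
  simp +contextual only [firstExceed, partialSum_flipSigns_of_le y le_rfl,
    partialSum_flipSigns_of_le y (Nat.le_of_lt _)]

lemma firstExceed.eq {t : ℝ} {j j' : ℕ} {σ : Fin N → Bool} (h : firstExceed y t j σ)
    (h' : firstExceed y t j' σ) : j = j' := by
  by_contra hne
  rcases Nat.lt_or_gt_of_ne hne with hlt | hlt
  · exact (h'.2 j hlt).not_gt h.1
  · exact (h.2 j' hlt).not_gt h'.1

lemma exists_firstExceed_of_lt {A t : ℝ} (hA : 0 ≤ A) (ht : 0 ≤ t) (hy : ∀ i, ‖y i‖ ≤ A)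
    {σ : Fin N → Bool} (hσ : 2 * t + A < ‖radSum y σ‖) :
    ∃ j ≤ N, firstExceed y t j σ ∧ t < ‖tailSum y j σ‖ := by
  have hN : t < ‖partialSum y N σ‖ := by rw [partialSum_length]; linarith
  have hex : ∃ m, t < ‖partialSum y m σ‖ := ⟨N, hN⟩
  have hfirst : firstExceed y t (Nat.find hex) σ :=
    ⟨Nat.find_spec hex, fun m hm => not_lt.1 (Nat.find_min hex hm)⟩
  obtain ⟨j, hj⟩ : ∃ j, Nat.find hex = j + 1 := Nat.exists_eq_succ_of_ne_zero fun h0 => by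
    have := Nat.find_spec hex
    rw [h0, partialSum_zero, norm_zero] at this
    linarith
  rw [hj] at hfirst
  refine ⟨j + 1, hj ▸ Nat.find_min' hex hN, hfirst, ?_⟩
  have h_part : ‖partialSum y (j + 1) σ‖ ≤ t + A :=
    (norm_partialSum_succ_le y hA hy j σ).trans (by linarith [hfirst.2 j j.lt_succ_self])
  have := norm_add_le (partialSum y (j + 1) σ) (tailSum y (j + 1) σ)
  rw [partialSum_add_tailSum] at this
  linarith

-- Lévy's inequality.
lemma sum_card_firstExceed_le (t : ℝ) :
    ∑ j ∈ range (N + 1), #{σ | firstExceed y t j σ} ≤ 2 * #{σ | t < ‖radSum y σ‖} := by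
  have h_refl : ∀ j, #{σ | firstExceed y t j σ} ≤
      2 * #{σ | firstExceed y t j σ ∧ t < ‖radSum y σ‖} := fun j =>
    card_filter_le_two_mul_of_perm (flipSigns fun i : Fin N => j ≤ (i : ℕ)) fun σ hσ => by
      rw [firstExceed_flipSigns_iff]
      rcases lt_norm_or_lt_norm_of_add_eq (radSum_add_radSum_flipSigns_le y j σ) hσ.1 with h | h
      exacts [Or.inl ⟨hσ, h⟩, Or.inr ⟨hσ, h⟩]
  have h_disj : (range (N + 1) : Set ℕ).PairwiseDisjoint
      fun j => ({σ | firstExceed y t j σ ∧ t < ‖radSum y σ‖} : Finset _) :=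
    fun j _ j' _ hne => disjoint_filter.2 fun σ _ h h' => hne (h.1.eq y h'.1)
  calc ∑ j ∈ range (N + 1), #{σ | firstExceed y t j σ}
      ≤ ∑ j ∈ range (N + 1), 2 * #{σ | firstExceed y t j σ ∧ t < ‖radSum y σ‖} :=
        sum_le_sum fun j _ => h_refl j
    _ = 2 * #((range (N + 1)).biUnion
          fun j => ({σ | firstExceed y t j σ ∧ t < ‖radSum y σ‖} : Finset _)) := by
        rw [← mul_sum, card_biUnion h_disj]
    _ ≤ 2 * #{σ | t < ‖radSum y σ‖} :=
        Nat.mul_le_mul_left _ (card_le_card fun σ hσ => by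
          obtain ⟨j, -, hj⟩ := mem_biUnion.1 hσ
          simpa using (mem_filter.1 hj).2.2)

lemma card_tailSum_gt_le (t : ℝ) (j : ℕ) :
    #{σ | t < ‖tailSum y j σ‖} ≤ 2 * #{σ | t < ‖radSum y σ‖} :=
  card_filter_le_two_mul_of_perm (flipSigns fun i : Fin N => (i : ℕ) < j) fun σ hσ =>
    lt_norm_or_lt_norm_of_add_eq (radSum_add_radSum_flipSigns_lt y j σ) hσ

lemma card_firstExceed_and_tailSum_gt (t : ℝ) (j : ℕ) :
    #{σ | firstExceed y t j σ ∧ t < ‖tailSum y j σ‖} * 2 ^ N =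
      #{σ | firstExceed y t j σ} * #{σ | t < ‖tailSum y j σ‖} := by
  have := card_filter_and_mul_card (fun i : Fin N => (i : ℕ) < j) (firstExceed y t j)
    (fun σ => t < ‖tailSum y j σ‖)
    (fun σ σ' h hσ => ⟨partialSum_congr y le_rfl h ▸ hσ.1,
      fun m hm => partialSum_congr y hm.le h ▸ hσ.2 m hm⟩)
    (fun σ σ' h hσ => by rwa [← tailSum_congr y h])
  simpa [Fintype.card_fun] using this

-- Hoffmann-Jørgensen's inequality.
lemma card_radSum_gt_mul_le {A t : ℝ} (hA : 0 ≤ A) (ht : 0 ≤ t) (hy : ∀ i, ‖y i‖ ≤ A) :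
    #{σ | 2 * t + A < ‖radSum y σ‖} * 2 ^ N ≤ 4 * #{σ | t < ‖radSum y σ‖} ^ 2 := by
  set c := #{σ | t < ‖radSum y σ‖}
  have h_cover : #{σ | 2 * t + A < ‖radSum y σ‖} ≤
      ∑ j ∈ range (N + 1), #{σ | firstExceed y t j σ ∧ t < ‖tailSum y j σ‖} :=
    (card_le_card fun σ hσ => by
      obtain ⟨j, hj, h⟩ := exists_firstExceed_of_lt y hA ht hy (mem_filter.1 hσ).2
      exact mem_biUnion.2 ⟨j, mem_range.2 (by omega), by simpa using h⟩).trans card_biUnion_le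
  calc #{σ | 2 * t + A < ‖radSum y σ‖} * 2 ^ N
      ≤ (∑ j ∈ range (N + 1), #{σ | firstExceed y t j σ ∧ t < ‖tailSum y j σ‖}) * 2 ^ N :=
        Nat.mul_le_mul_right _ h_cover
    _ = ∑ j ∈ range (N + 1), #{σ | firstExceed y t j σ} * #{σ | t < ‖tailSum y j σ‖} := by
        rw [sum_mul]
        exact sum_congr rfl fun j _ => card_firstExceed_and_tailSum_gt y t j
    _ ≤ ∑ j ∈ range (N + 1), #{σ | firstExceed y t j σ} * (2 * c) :=
        sum_le_sum fun j _ => Nat.mul_le_mul_left _ (card_tailSum_gt_le y t j)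
    _ ≤ 2 * c * (2 * c) := by
        rw [← sum_mul]
        exact Nat.mul_le_mul_right _ (sum_card_firstExceed_le y t)
    _ = 4 * c ^ 2 := by ring

lemma card_radSum_gt_le_geometric {A β : ℝ} (hA : 0 < A) (hβ : 1 ≤ β) (hy : ∀ i, ‖y i‖ ≤ A)
    (h_mean : ∑ σ, ‖radSum y σ‖ ≤ 2 ^ N * A) (j : ℕ) :
    (#{σ | β * 3 ^ j * A < ‖radSum y σ‖} : ℝ) ≤ (4 / β) ^ j * (2 ^ N / β) := by
  have hβ0 : 0 < β := by linarith
  have h_markov : ∀ j : ℕ, (#{σ | β * 3 ^ j * A < ‖radSum y σ‖} : ℝ) ≤ 2 ^ N / β := fun j => by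
    have h := (card_filter_mul_le_sum (fun σ => ‖radSum y σ‖) (fun _ => norm_nonneg _)
      (β * 3 ^ j * A)).trans h_mean
    have h3 : (1 : ℝ) ≤ 3 ^ j := one_le_pow₀ (by norm_num)
    rw [le_div_iff₀ hβ0]
    refine le_of_mul_le_mul_right ?_ hA
    nlinarith [mul_nonneg (mul_nonneg (Nat.cast_nonneg (α := ℝ)
      #{σ | β * 3 ^ j * A < ‖radSum y σ‖}) hβ0.le) hA.le]
  induction j with
  | zero => simpa using h_markov 0
  | succ j ih =>
    set c := (#{σ | β * 3 ^ j * A < ‖radSum y σ‖} : ℝ)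
    have h_thresh : 2 * (β * 3 ^ j * A) + A ≤ β * 3 ^ (j + 1) * A := by
      have : A ≤ β * 3 ^ j * A := le_mul_of_one_le_left hA.le
        (one_le_mul_of_one_le_of_one_le hβ (one_le_pow₀ (by norm_num)))
      rw [pow_succ]; linarith
    have h_mono : (#{σ | β * 3 ^ (j + 1) * A < ‖radSum y σ‖} : ℝ) ≤
        #{σ | 2 * (β * 3 ^ j * A) + A < ‖radSum y σ‖} := by
      refine Nat.cast_le.2 (card_le_card fun σ hσ => ?_)
      simp only [mem_filter, mem_univ, true_and] at hσ ⊢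
      exact h_thresh.trans_lt hσ
    have h_hj : (#{σ | 2 * (β * 3 ^ j * A) + A < ‖radSum y σ‖} : ℝ) * 2 ^ N ≤ 4 * c ^ 2 := by
      have := Nat.cast_le (α := ℝ) |>.2 <|
        card_radSum_gt_mul_le y hA.le (t := β * 3 ^ j * A) (by positivity) hy
      simpa only [Nat.cast_mul, Nat.cast_pow, Nat.cast_ofNat] using this
    have h_c : c * β ≤ 2 ^ N := (le_div_iff₀ hβ0).1 (h_markov j)
    have h_step : (#{σ | 2 * (β * 3 ^ j * A) + A < ‖radSum y σ‖} : ℝ) ≤ 4 / β * c := by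
      rw [div_mul_eq_mul_div, le_div_iff₀ hβ0]
      refine le_of_mul_le_mul_right ?_ (by positivity : (0 : ℝ) < 2 ^ N)
      nlinarith [mul_le_mul_of_nonneg_left h_c (by positivity : (0 : ℝ) ≤ 4 * c)]
    calc _ ≤ 4 / β * c := h_mono.trans h_step
      _ ≤ 4 / β * ((4 / β) ^ j * (2 ^ N / β)) := by gcongr
      _ = (4 / β) ^ (j + 1) * (2 ^ N / β) := by ring

def kahaneConst (p : ℝ) : ℝ := 16 * 3 ^ ⌈p⌉₊

lemma kahaneConst_pos (p : ℝ) : 0 < kahaneConst p := by unfold kahaneConst; positivity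

lemma norm_radSum_rpow_le {p A β : ℝ} (hp : 0 < p) (hA : 0 ≤ A) (hβ : 1 ≤ β)
    (hy : ∀ i, ‖y i‖ ≤ A) (σ : Fin N → Bool) :
    ‖radSum y σ‖ ^ p ≤ (β * A) ^ p + ∑ j ∈ range N,
      if β * 3 ^ j * A < ‖radSum y σ‖ then (β * 3 ^ (j + 1) * A) ^ p else 0 := by
  have h_bound : ‖radSum y σ‖ ≤ β * 3 ^ N * A :=
    calc ‖radSum y σ‖ ≤ ∑ i, ‖boolSign (σ i) • y i‖ := norm_sum_le _ _
      _ ≤ ∑ _i : Fin N, A := sum_le_sum fun i _ => (norm_boolSign_smul _ _).trans_le (hy i)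
      _ = N * A := by simp
      _ ≤ 3 ^ N * A := by gcongr; exact_mod_cast (Nat.lt_pow_self (by norm_num)).le
      _ ≤ β * 3 ^ N * A := by rw [mul_assoc]; exact le_mul_of_one_le_left (by positivity) hβ
  have := min_le_add_sum_ite (‖radSum y σ‖ ^ p)
    (t := fun j => (β * 3 ^ j * A) ^ p) (fun j => by positivity) N
  rw [min_eq_left (Real.rpow_le_rpow (norm_nonneg _) h_bound hp.le), pow_zero, mul_one] at this
  refine this.trans_eq (congrArg _ (sum_congr rfl fun j _ => ?_))
  exact if_congr (Real.rpow_lt_rpow_iff (by positivity) (norm_nonneg _) hp) rfl rfl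

lemma rpow_mul_card_radSum_gt_le {p A β : ℝ} (hp : 0 < p) (hA : 0 < A) (hβ : 8 * 3 ^ p ≤ β)
    (hy : ∀ i, ‖y i‖ ≤ A) (h_mean : ∑ σ, ‖radSum y σ‖ ≤ 2 ^ N * A) (j : ℕ) :
    (β * 3 ^ (j + 1) * A) ^ p * #{σ | β * 3 ^ j * A < ‖radSum y σ‖} ≤
      2 ^ N * (β * A) ^ p * (1 / 8) * (1 / 2) ^ j := by
  have h3p : 1 ≤ (3 : ℝ) ^ p := Real.one_le_rpow (by norm_num) hp.le
  have hβ0 : 0 < β := by linarith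
  have h_split : (β * 3 ^ (j + 1) * A) ^ p = (β * A) ^ p * 3 ^ p * ((3 : ℝ) ^ p) ^ j := by
    rw [show β * 3 ^ (j + 1) * A = β * A * 3 ^ (j + 1) by ring,
      Real.mul_rpow (by positivity) (by positivity), ← Real.rpow_pow_comm (by norm_num), pow_succ]
    ring
  have h1 : (3 : ℝ) ^ p / β ≤ 1 / 8 := by rw [div_le_iff₀ hβ0]; linarith
  have h2 : (3 : ℝ) ^ p * 4 / β ≤ 1 / 2 := by rw [div_le_iff₀ hβ0]; linarith
  rw [h_split]
  calc _ ≤ (β * A) ^ p * 3 ^ p * ((3 : ℝ) ^ p) ^ j * ((4 / β) ^ j * (2 ^ N / β)) := by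
        gcongr
        exact card_radSum_gt_le_geometric y hA (by linarith) hy h_mean j
    _ = 2 ^ N * (β * A) ^ p * (3 ^ p / β) * (3 ^ p * 4 / β) ^ j := by ring
    _ ≤ 2 ^ N * (β * A) ^ p * (1 / 8) * (1 / 2) ^ j := by gcongr

-- The layer-cake decomposition over the thresholds `β 3ʲ A`, whose tail counts decay
-- geometrically by Hoffmann-Jørgensen's inequality.
lemma sum_norm_radSum_rpow_le {p A β : ℝ} (hp : 0 < p) (hA : 0 < A) (hβ : 8 * 3 ^ p ≤ β)
    (hy : ∀ i, ‖y i‖ ≤ A) (h_mean : ∑ σ, ‖radSum y σ‖ ≤ 2 ^ N * A) :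
    ∑ σ, ‖radSum y σ‖ ^ p ≤ 2 ^ N * (2 * (β * A) ^ p) := by
  have hβ1 : 1 ≤ β := by linarith [Real.one_le_rpow (by norm_num : (1 : ℝ) ≤ 3) hp.le]
  have hβA : 0 ≤ 2 ^ N * (β * A) ^ p := by positivity
  calc ∑ σ, ‖radSum y σ‖ ^ p
      ≤ ∑ σ, ((β * A) ^ p + ∑ j ∈ range N,
          if β * 3 ^ j * A < ‖radSum y σ‖ then (β * 3 ^ (j + 1) * A) ^ p else 0) :=
        sum_le_sum fun σ _ => norm_radSum_rpow_le y hp hA.le hβ1 hy σ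
    _ = 2 ^ N * (β * A) ^ p + ∑ j ∈ range N,
          (β * 3 ^ (j + 1) * A) ^ p * #{σ | β * 3 ^ j * A < ‖radSum y σ‖} := by
        rw [sum_add_distrib, sum_comm]
        congr 1
        · simp
        · exact sum_congr rfl fun j _ => by rw [← sum_filter, sum_const, nsmul_eq_mul, mul_comm]
    _ ≤ 2 ^ N * (β * A) ^ p + ∑ j ∈ range N, 2 ^ N * (β * A) ^ p * (1 / 8) * (1 / 2) ^ j := by
        exact add_le_add_right (sum_le_sum fun j _ =>
          rpow_mul_card_radSum_gt_le y hp hA hβ hy h_mean j) _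
    _ ≤ 2 ^ N * (β * A) ^ p + 2 ^ N * (β * A) ^ p * (1 / 8) * 2 := by
        rw [← mul_sum]
        gcongr
        exact sum_geometric_two_le N
    _ ≤ 2 ^ N * (2 * (β * A) ^ p) := by linarith

lemma radExpect_rpow_le_fin {p : ℝ} (hp : 1 ≤ p) :
    radExpect (‖·‖ ^ p) y ≤ (kahaneConst p * radExpect (‖·‖) y) ^ p := by
  have hp0 : 0 < p := by linarith
  set A := radExpect (‖·‖) y
  have hy : ∀ i, ‖y i‖ ≤ A := norm_le_radExpect_norm y
  have hA0 : 0 ≤ A := radExpect_nonneg norm_nonneg y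
  rcases hA0.eq_or_lt with hA | hA
  · have hy0 : y = 0 := funext fun i => norm_le_zero_iff.1 (hA ▸ hy i)
    simp only [radExpect, radSum, hy0, Pi.zero_apply, smul_zero, sum_const_zero, norm_zero,
      Real.zero_rpow hp0.ne', mul_zero]
    exact Real.rpow_nonneg (mul_nonneg (kahaneConst_pos p).le hA0) p
  set β : ℝ := 8 * 3 ^ ⌈p⌉₊
  have hβ : 8 * (3 : ℝ) ^ p ≤ β := by
    show _ ≤ 8 * (3 : ℝ) ^ ⌈p⌉₊
    gcongr
    rw [← Real.rpow_natCast]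
    exact Real.rpow_le_rpow_of_exponent_le (by norm_num) (Nat.le_ceil p)
  have h_mean : ∑ σ, ‖radSum y σ‖ = 2 ^ N * A := by
    simp only [A, radExpect, Fintype.card_fin]
    field_simp
  have h_two : (2 : ℝ) ≤ 2 ^ p := by
    simpa using Real.rpow_le_rpow_of_exponent_le (by norm_num : (1 : ℝ) ≤ 2) hp
  calc radExpect (‖·‖ ^ p) y = (2 ^ N)⁻¹ * ∑ σ, ‖radSum y σ‖ ^ p := by simp [radExpect]
    _ ≤ (2 ^ N)⁻¹ * (2 ^ N * (2 * (β * A) ^ p)) := by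
        gcongr
        exact sum_norm_radSum_rpow_le y hp0 hA hβ hy h_mean.le
    _ = 2 * (β * A) ^ p := by field_simp
    _ ≤ 2 ^ p * (β * A) ^ p := by gcongr
    _ = (kahaneConst p * A) ^ p := by
        rw [← Real.mul_rpow (by norm_num) (by positivity), kahaneConst]
        congr 1
        ring

end Kahane

section Rademacher

variable {ι κ E : Type*} [Fintype ι] [DecidableEq ι] [Fintype κ] [DecidableEq κ]
  [NormedAddCommGroup E] [NormedSpace ℝ E]

lemma radExpect_comp_equiv (e : ι ≃ κ) (F : E → ℝ) (y : κ → E) :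
    radExpect F (fun i => y (e i)) = radExpect F y := by
  rw [radExpect, radExpect, Fintype.card_congr e]
  congr 1
  refine Fintype.sum_equiv (e.arrowCongr (Equiv.refl Bool)) _ _ fun σ => ?_
  rw [radSum, radSum, ← Equiv.sum_comp e]
  simp [Equiv.arrowCongr_apply]

-- Kahane's inequality.
theorem radExpect_rpow_le {p : ℝ} (hp : 1 ≤ p) (y : ι → E) :
    radExpect (‖·‖ ^ p) y ≤ (kahaneConst p * radExpect (‖·‖) y) ^ p := by
  have e := Fintype.equivFin ι
  rw [← radExpect_comp_equiv e.symm, ← radExpect_comp_equiv e.symm (‖·‖)]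
  exact radExpect_rpow_le_fin _ hp

lemma radExpect_boolSign_smul (τ : ι → Bool) (F : E → ℝ) (y : ι → E) :
    radExpect F (fun i => boolSign (τ i) • y i) = radExpect F y := by
  rw [radExpect, radExpect]
  congr 1
  refine Fintype.sum_equiv (flipSigns fun i => τ i = false) _ _ fun σ => ?_
  refine congrArg F (sum_congr rfl fun i _ => ?_)
  rw [smul_smul, boolSign_flipSigns]
  cases τ i <;> simp

lemma radExpect_subtype (p : ι → Prop) [DecidablePred p] (F : E → ℝ) {w : ι → E}
    (hw : ∀ i, ¬ p i → w i = 0) : radExpect F (fun i : {i // p i} => w i) = radExpect F w := by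
  let e := Equiv.piEquivPiSubtypeProd p fun _ => Bool
  have h_sum : ∀ σ, radSum w σ = radSum (fun i : {i // p i} => w i) (e σ).1 := fun σ => by
    have h0 : ∑ i : {i // ¬ p i}, boolSign (σ i) • w i = 0 :=
      Fintype.sum_eq_zero _ fun i => by rw [hw i i.2, smul_zero]
    rw [radSum, ← Fintype.sum_subtype_add_sum_subtype p, h0, add_zero]
    rfl
  have h_card : (2 : ℝ) ^ Fintype.card ι =
      2 ^ Fintype.card {i // p i} * 2 ^ Fintype.card {i // ¬ p i} := by
    have := Fintype.card_congr e
    simp only [Fintype.card_prod, Fintype.card_fun, Fintype.card_bool] at this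
    exact_mod_cast this
  rw [radExpect, radExpect, h_card, ← Equiv.sum_comp e.symm, Fintype.sum_prod_type]
  simp only [h_sum, Equiv.apply_symm_apply, sum_const, card_univ, Fintype.card_fun,
    Fintype.card_bool, nsmul_eq_mul, Nat.cast_pow, Nat.cast_ofNat, ← mul_sum]
  field_simp

lemma radExpect_sum_fiberwise (φ : ι → κ) (F : E → ℝ) {v : ι → E}
    (hφ : ∀ i j, v i ≠ 0 → v j ≠ 0 → φ i = φ j → i = j) :
    radExpect F (fun k => ∑ i with φ i = k, v i) = radExpect F v := by
  classical
  set w := fun k => ∑ i with φ i = k, v i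
  have hw : ∀ i, v i ≠ 0 → w (φ i) = v i := fun i hi =>
    sum_eq_single_of_mem i (by simp) fun j hj hji =>
      by_contra fun hj0 => hji (hφ j i hj0 hi (mem_filter.1 hj).2)
  let e : {i // v i ≠ 0} ≃ {k // ∃ i, v i ≠ 0 ∧ φ i = k} :=
    Equiv.ofBijective (fun i => ⟨φ i, i, i.2, rfl⟩)
      ⟨fun i j h => Subtype.ext (hφ i j i.2 j.2 (congrArg Subtype.val h)),
        fun ⟨k, i, hi, hik⟩ => ⟨⟨i, hi⟩, Subtype.ext hik⟩⟩
  rw [← radExpect_subtype (fun i => v i ≠ 0) F (fun i h => not_not.1 h),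
    ← radExpect_subtype (fun k => ∃ i, v i ≠ 0 ∧ φ i = k) F (w := w) fun k hk =>
      sum_eq_zero fun i hi => by_contra fun h => hk ⟨i, h, (mem_filter.1 hi).2⟩,
    ← radExpect_comp_equiv e]
  exact congrArg _ (funext fun i => hw i i.2)

lemma radExpect_norm_le_rpow {p : ℝ} (hp : 1 ≤ p) (y : ι → E) :
    radExpect (‖·‖) y ≤ radExpect (‖·‖ ^ p) y ^ (1 / p) := by
  have h_weights : ∑ _σ : ι → Bool, (2 ^ Fintype.card ι : ℝ)⁻¹ = 1 := by
    simp
  simpa only [radExpect, mul_sum] using Real.arith_mean_le_rpow_mean univ _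
    (fun σ => ‖radSum y σ‖) (fun _ _ => by positivity) h_weights (fun _ _ => norm_nonneg _) hp

theorem radExpect_norm_le_of_radExpect_rpow_eq {p : ℝ} (hp : 1 ≤ p) {v : ι → E} {w : κ → E}
    (h : radExpect (‖·‖ ^ p) v = radExpect (‖·‖ ^ p) w) :
    radExpect (‖·‖) v ≤ kahaneConst p * radExpect (‖·‖) w :=
  calc radExpect (‖·‖) v ≤ radExpect (‖·‖ ^ p) w ^ (1 / p) := h ▸ radExpect_norm_le_rpow hp v
    _ ≤ ((kahaneConst p * radExpect (‖·‖) w) ^ p) ^ (1 / p) := by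
        gcongr
        · exact radExpect_nonneg (fun _ => by positivity) w
        · exact radExpect_rpow_le hp w
    _ = kahaneConst p * radExpect (‖·‖) w := by
        rw [one_div, Real.rpow_rpow_inv (mul_nonneg (kahaneConst_pos p).le
          (radExpect_nonneg norm_nonneg w)) (by linarith)]

end Rademacher

section Lp

variable {α ι κ E : Type*} [MeasurableSpace α] {μ : Measure α} [NormedAddCommGroup E]

lemma toReal_eLpNorm_ofReal_rpow {p : ℝ} (hp : 0 < p) {f : α → E}
    (hf : AEStronglyMeasurable f μ) :
    (eLpNorm f (ENNReal.ofReal p) μ).toReal ^ p = ∫ x, ‖f x‖ ^ p ∂μ := by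
  rw [toReal_eLpNorm hf, lpNorm_eq_integral_norm_rpow_toReal (by simpa using hp)
    ENNReal.ofReal_ne_top hf, ENNReal.toReal_ofReal hp.le,
    Real.rpow_inv_rpow (integral_nonneg fun _ => by positivity) hp.ne']

lemma MemLp.toLp_finsetSum {P : ℝ≥0∞} (s : Finset ι) {f : ι → α → E}
    (hf : ∀ i, MemLp (f i) P μ) :
    (memLp_finsetSum' s fun i _ => hf i).toLp (∑ i ∈ s, f i) = ∑ i ∈ s, (hf i).toLp (f i) := by
  classical
  induction s using Finset.induction_on with
  | empty =>
    simp only [sum_empty]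
    exact MemLp.toLp_zero _
  | insert a s ha ih =>
    simp only [sum_insert ha, ← ih]
    exact MemLp.toLp_add _ _

variable [NormedSpace ℝ E] [Fintype ι]

lemma memLp_radSum {P : ℝ≥0∞} {f : ι → α → E} (hf : ∀ i, MemLp (f i) P μ) (σ : ι → Bool) :
    MemLp (fun x => radSum (f · x) σ) P μ :=
  memLp_finsetSum _ fun i _ => (hf i).const_smul _

lemma radSum_toLp {P : ℝ≥0∞} [Fact (1 ≤ P)] {f : ι → α → E} (hf : ∀ i, MemLp (f i) P μ)
    (σ : ι → Bool) :
    radSum (fun i => (hf i).toLp (f i)) σ = (memLp_radSum hf σ).toLp _ := by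
  simp only [radSum, ← MemLp.toLp_const_smul]
  rw [← MemLp.toLp_finsetSum _ fun i => (hf i).const_smul _]
  exact MemLp.toLp_congr _ _ (.of_eq (funext fun x => by simp))

variable [DecidableEq ι]

def lpRadMean (p : ℝ) (μ : Measure α) (f : ι → α → E) : ℝ :=
  (2 ^ Fintype.card ι : ℝ)⁻¹ *
    ∑ σ : ι → Bool, (eLpNorm (fun x => radSum (f · x) σ) (ENNReal.ofReal p) μ).toReal

lemma lpRadMean_eq_radExpect_toLp {p : ℝ} [Fact (1 ≤ ENNReal.ofReal p)] {f : ι → α → E}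
    (hf : ∀ i, MemLp (f i) (ENNReal.ofReal p) μ) :
    lpRadMean p μ f = radExpect (‖·‖) (fun i => (hf i).toLp (f i)) := by
  simp only [lpRadMean, radExpect, radSum_toLp, Lp.norm_toLp]

lemma radExpect_rpow_toLp {p : ℝ} (hp : 1 ≤ p) [Fact (1 ≤ ENNReal.ofReal p)] {f : ι → α → E}
    (hf : ∀ i, MemLp (f i) (ENNReal.ofReal p) μ) :
    radExpect (‖·‖ ^ p) (fun i => (hf i).toLp (f i)) =
      ∫ x, radExpect (‖·‖ ^ p) (f · x) ∂μ := by
  have hp0 : 0 < p := by linarith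
  simp only [radExpect]
  rw [integral_const_mul, integral_finsetSum _ fun σ _ => by
    simpa [ENNReal.toReal_ofReal hp0.le] using
      (memLp_radSum hf σ).integrable_norm_rpow (by simpa using hp0) ENNReal.ofReal_ne_top]
  congr 1
  refine sum_congr rfl fun σ _ => ?_
  rw [radSum_toLp, Lp.norm_toLp, toReal_eLpNorm_ofReal_rpow hp0 (memLp_radSum hf σ).1]

-- Kahane's inequality in `L^p(μ; E)` reduces the comparison of the two `L^p`-norm averages to
-- that of the `p`-th moments, which are integrals of pointwise moments by Fubini.
theorem lpRadMean_le_of_ae_radExpect_rpow_eq [Fintype κ] [DecidableEq κ] {p : ℝ} (hp : 1 ≤ p)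
    {f : ι → α → E} {g : κ → α → E} (hf : ∀ i, MemLp (f i) (ENNReal.ofReal p) μ)
    (hg : ∀ k, MemLp (g k) (ENNReal.ofReal p) μ)
    (h : ∀ᵐ x ∂μ, radExpect (‖·‖ ^ p) (f · x) = radExpect (‖·‖ ^ p) (g · x)) :
    lpRadMean p μ f ≤ kahaneConst p * lpRadMean p μ g := by
  have : Fact (1 ≤ ENNReal.ofReal p) := ⟨ENNReal.one_le_ofReal.2 hp⟩
  rw [lpRadMean_eq_radExpect_toLp hf, lpRadMean_eq_radExpect_toLp hg]
  refine radExpect_norm_le_of_radExpect_rpow_eq hp ?_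
  rw [radExpect_rpow_toLp hp hf, radExpect_rpow_toLp hp hg]
  exact integral_congr_ae h

end Lp

section Grouping

variable {α β Ω E : Type*} [MeasurableSpace Ω] [NormedAddCommGroup E] [NormedSpace ℝ E]
  {s : Finset α}

lemma sum_sgn_smul_eq_radSum [DecidableEq α] (σ : s → Bool) (F : α → E) :
    ∑ a ∈ s, sgn s σ a • F a = radSum (fun a : s => F a) σ := by
  rw [← sum_coe_sort s]
  refine sum_congr rfl fun a _ => ?_
  simp only [sgn, dif_pos a.2]
  rfl

lemma sum_sgn_comp_smul_eq_radSum_fiberwise [DecidableEq β] {K : Finset β} (φ : α → β)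
    (hφ : ∀ a ∈ s, φ a ∈ K) (σ : K → Bool) (F : α → E) :
    ∑ a ∈ s, sgn K σ (φ a) • F a = radSum (fun k => ∑ a with Subtype.map φ hφ a = k, F a) σ := by
  rw [← sum_coe_sort s, ← sum_fiberwise univ (Subtype.map φ hφ)]
  refine sum_congr rfl fun k _ => ?_
  rw [smul_sum]
  refine sum_congr rfl fun a ha => ?_
  rw [← (mem_filter.1 ha).2]
  simp only [sgn, dif_pos (hφ a a.2)]
  rfl

lemma sgn_average_eLpNorm_eq_lpRadMean [DecidableEq α] (p : ℝ) (μ : Measure Ω)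
    (F : α → Ω → E) :
    ((2 : ℝ) ^ s.card)⁻¹ * ∑ σ : s → Bool,
        (eLpNorm (fun x => ∑ a ∈ s, sgn s σ a • F a x) (ENNReal.ofReal p) μ).toReal =
      lpRadMean p μ (fun a : s => F a) := by
  simp only [lpRadMean, Fintype.card_coe, sum_sgn_smul_eq_radSum]

lemma sgn_comp_average_eLpNorm_eq_lpRadMean [DecidableEq β] {K : Finset β} (φ : α → β)
    (hφ : ∀ a ∈ s, φ a ∈ K) (p : ℝ) (μ : Measure Ω) (F : α → Ω → E) :
    ((2 : ℝ) ^ K.card)⁻¹ * ∑ σ : K → Bool,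
        (eLpNorm (fun x => ∑ a ∈ s, sgn K σ (φ a) • F a x) (ENNReal.ofReal p) μ).toReal =
      lpRadMean p μ (fun k x => ∑ a with Subtype.map φ hφ a = k, F a x) := by
  simp only [lpRadMean, Fintype.card_coe, sum_sgn_comp_smul_eq_radSum_fiberwise φ hφ]

end Grouping

section Dyadic

variable {n : ℕ} {X : Type*} [NormedAddCommGroup X] [NormedSpace ℝ X]

lemma measurableSet_dyadicCube (k : ℤ) (m : Fin n → ℤ) : MeasurableSet (dyadicCube n k m) := by
  have : dyadicCube n k m =
      Set.univ.pi fun i => Set.Ico ((2 : ℝ) ^ k * m i) (2 ^ k * (m i + 1)) := by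
    ext x
    simp [dyadicCube]
  rw [this]
  exact .univ_pi fun _ => measurableSet_Ico

lemma eq_floor_of_mem_dyadicCube {k : ℤ} {m : Fin n → ℤ} {x : Fin n → ℝ}
    (hx : x ∈ dyadicCube n k m) : m = fun i => ⌊x i / 2 ^ k⌋ := by
  have h2k : (0 : ℝ) < 2 ^ k := zpow_pos two_pos k
  funext i
  obtain ⟨h1, h2⟩ := hx i
  rw [eq_comm, Int.floor_eq_iff, le_div_iff₀ h2k, div_lt_iff₀ h2k]
  constructor <;> linarith

def isLowerHalf (hn : 0 < n) (k : ℤ) (x : Fin n → ℝ) : Bool :=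
  decide (x ⟨0, hn⟩ < 2 ^ k * ⌊x ⟨0, hn⟩ / 2 ^ k⌋ + 2 ^ (k - 1))

-- At a point `x`, all Haar functions of the same scale carry the same sign.
lemma haarFn_smul_eq (hn : 0 < n) (q : ℤ × (Fin n → ℤ)) (u : (Fin n → ℝ) → X)
    (x : Fin n → ℝ) :
    haarFn n hn q x • u x =
      boolSign (isLowerHalf hn q.1 x) • Set.indicator (dyadicCube n q.1 q.2) u x := by
  by_cases hx : x ∈ dyadicCube n q.1 q.2
  · rw [haarFn, Set.indicator_of_mem hx, Set.indicator_of_mem hx,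
      congrFun (eq_floor_of_mem_dyadicCube hx) ⟨0, hn⟩]
    by_cases h : x ⟨0, hn⟩ < 2 ^ q.1 * ⌊x ⟨0, hn⟩ / 2 ^ q.1⌋ + 2 ^ (q.1 - 1) <;>
      simp [isLowerHalf, h]
  · rw [haarFn, Set.indicator_of_notMem hx, Set.indicator_of_notMem hx, zero_smul, smul_zero]

lemma memLp_haarFn_smul (hn : 0 < n) (q : ℤ × (Fin n → ℤ)) {u : (Fin n → ℝ) → X}
    {P : ℝ≥0∞} (hu : MemLp u P volume) : MemLp (fun x => haarFn n hn q x • u x) P volume := by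
  have h_meas : Measurable (haarFn n hn q) :=
    (Measurable.ite (measurableSet_lt (measurable_pi_apply _) measurable_const) measurable_const
      measurable_const).indicator (measurableSet_dyadicCube _ _)
  have h_abs : ∀ x, ‖haarFn n hn q x‖ ≤ 1 := fun x => by
    unfold haarFn
    by_cases hx : x ∈ dyadicCube n q.1 q.2
    · rw [Set.indicator_of_mem hx]; split_ifs <;> simp
    · simp [Set.indicator_of_notMem hx]
  refine hu.of_le (h_meas.aestronglyMeasurable.smul hu.1) (ae_of_all _ fun x => ?_)
  rw [norm_smul]
  exact mul_le_of_le_one_left (norm_nonneg _) (h_abs x)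

def dyadicScale (S : Finset (ℤ × (Fin n → ℤ))) : S → S.image Prod.fst :=
  Subtype.map Prod.fst fun _ => mem_image_of_mem _

variable {S : Finset (ℤ × (Fin n → ℤ))} (u : ℤ × (Fin n → ℤ) → (Fin n → ℝ) → X)

lemma radExpect_haarFn_smul (hn : 0 < n) (F : X → ℝ) (x : Fin n → ℝ) :
    radExpect F (fun k => ∑ q with dyadicScale S q = k, haarFn n hn q x • u q x) =
      radExpect F (fun k => ∑ q with dyadicScale S q = k,
        Set.indicator (dyadicCube n q.1.1 q.1.2) (u q) x) := by
  refine (congrArg _ (funext fun k => ?_)).trans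
    (radExpect_boolSign_smul (fun k : S.image Prod.fst => isLowerHalf hn k x) F _)
  rw [smul_sum]
  refine sum_congr rfl fun q hq => ?_
  rw [haarFn_smul_eq, ← (mem_filter.1 hq).2]
  rfl

-- At most one cube of each scale contains `x`.
lemma radExpect_sum_indicator_dyadicScale (F : X → ℝ) (x : Fin n → ℝ) :
    radExpect F (fun k => ∑ q with dyadicScale S q = k,
        Set.indicator (dyadicCube n q.1.1 q.1.2) (u q) x) =
      radExpect F (fun q : S => Set.indicator (dyadicCube n q.1.1 q.1.2) (u q) x) := by
  refine radExpect_sum_fiberwise _ F fun q q' hq hq' h => ?_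
  have h_scale : q.1.1 = q'.1.1 := congrArg Subtype.val h
  refine Subtype.ext (Prod.ext h_scale ?_)
  rw [eq_floor_of_mem_dyadicCube (Set.mem_of_indicator_ne_zero hq),
    eq_floor_of_mem_dyadicCube (Set.mem_of_indicator_ne_zero hq'), h_scale]

end Dyadic

/-- Sign-invariance: the randomized `L^p` norms of `∑_k ε_k ∑_{Q∈Δ_{2^k}} 1_Q u_Q`,
`∑_k ε_k ∑_{Q∈Δ_{2^k}} h_Q u_Q` and `∑_Q ε_Q 1_Q u_Q` are pairwise comparable,
with constants depending only on `p`. -/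
theorem sign_invariance (n : ℕ) (hn : 0 < n) {X : Type*}
    [NormedAddCommGroup X] [NormedSpace ℝ X] (p : ℝ) (hp : 1 ≤ p) :
    ∃ C : ℝ, 0 < C ∧
      ∀ (S : Finset (ℤ × (Fin n → ℤ))) (u : ℤ × (Fin n → ℤ) → (Fin n → ℝ) → X),
        (∀ q, MemLp (u q) (ENNReal.ofReal p) volume) →
        (∀ q ∉ S, u q = 0) →
        let K := S.image Prod.fst
        let E₁ := ((2 : ℝ) ^ K.card)⁻¹ * ∑ σ : {k // k ∈ K} → Bool,
          (eLpNorm (fun x => ∑ q ∈ S, sgn K σ q.1 •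
            Set.indicator (dyadicCube n q.1 q.2) (u q) x) (ENNReal.ofReal p) volume).toReal
        let E₂ := ((2 : ℝ) ^ K.card)⁻¹ * ∑ σ : {k // k ∈ K} → Bool,
          (eLpNorm (fun x => ∑ q ∈ S, (sgn K σ q.1 * haarFn n hn q x) •
            u q x) (ENNReal.ofReal p) volume).toReal
        let E₃ := ((2 : ℝ) ^ S.card)⁻¹ * ∑ σ : {q // q ∈ S} → Bool,
          (eLpNorm (fun x => ∑ q ∈ S, sgn S σ q •
            Set.indicator (dyadicCube n q.1 q.2) (u q) x) (ENNReal.ofReal p) volume).toReal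
        E₁ ≤ C * E₂ ∧ E₂ ≤ C * E₁ ∧ E₂ ≤ C * E₃ ∧ E₃ ≤ C * E₂ ∧
          E₁ ≤ C * E₃ ∧ E₃ ≤ C * E₁ := by
  refine ⟨kahaneConst p, kahaneConst_pos p, fun S u hu _ => ?_⟩
  intro K E₁ E₂ E₃
  have hK : ∀ q ∈ S, q.1 ∈ K := fun q => mem_image_of_mem Prod.fst
  let f₁ (k : K) (x : Fin n → ℝ) : X :=
    ∑ q with dyadicScale S q = k, Set.indicator (dyadicCube n q.1.1 q.1.2) (u q) x
  let f₂ (k : K) (x : Fin n → ℝ) : X := ∑ q with dyadicScale S q = k, haarFn n hn q x • u q x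
  let f₃ (q : S) (x : Fin n → ℝ) : X := Set.indicator (dyadicCube n q.1.1 q.1.2) (u q) x
  have h₁ : E₁ = lpRadMean p volume f₁ := sgn_comp_average_eLpNorm_eq_lpRadMean _ hK _ _ _
  have h₂ : E₂ = lpRadMean p volume f₂ := by
    simp only [E₂, mul_smul]
    exact sgn_comp_average_eLpNorm_eq_lpRadMean _ hK _ _ _
  have h₃ : E₃ = lpRadMean p volume f₃ := sgn_average_eLpNorm_eq_lpRadMean _ _ _
  have hf₃ : ∀ q, MemLp (f₃ q) (ENNReal.ofReal p) volume :=
    fun q => (hu q).indicator (measurableSet_dyadicCube _ _)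
  have hf₁ : ∀ k, MemLp (f₁ k) (ENNReal.ofReal p) volume :=
    fun k => memLp_finsetSum _ fun q _ => hf₃ q
  have hf₂ : ∀ k, MemLp (f₂ k) (ENNReal.ofReal p) volume :=
    fun k => memLp_finsetSum _ fun q _ => memLp_haarFn_smul hn q (hu q)
  have m₁ : ∀ x, radExpect (‖·‖ ^ p) (f₁ · x) = radExpect (‖·‖ ^ p) (f₃ · x) :=
    radExpect_sum_indicator_dyadicScale u _
  have m₂ : ∀ x, radExpect (‖·‖ ^ p) (f₂ · x) = radExpect (‖·‖ ^ p) (f₃ · x) :=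
    fun x => (radExpect_haarFn_smul u hn _ x).trans (m₁ x)
  rw [h₁, h₂, h₃]
  refine ⟨?_, ?_, ?_, ?_, ?_, ?_⟩ <;>
    exact lpRadMean_le_of_ae_radExpect_rpow_eq hp ‹_› ‹_› (.of_forall fun x => by simp only [m₁, m₂])
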